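/- arXiv:2211.11804 — 13 statements merged into one kernel-verified Lean document; each statement's English description precedes it below -/
import Mathlib

section
/- For every integer k ≥ 1, the cokernel of the ℤ-linear endomorphism of (Fin 3 → ℤ) given by the matrix [[-6k, 0, 0], [0, 6, 3], [0, 3, 2]] is isomorphic, as an additive group, to ZMod (6k) × ZMod 3. -/
/-- For every integer k ≥ 1, the cokernel of the ℤ-linear endomorphism of
`Fin 3 → ℤ` given by the matrix `[[-6k, 0, 0], [0, 6, 3], [0, 3, 2]]` (the Gram matrix of
the transcendental lattice T(X)) is isomorphic, as an additive group, to
`ZMod (6k) × ZMod 3`. -/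
theorem stmt_0 (k : ℕ) (hk : 1 ≤ k) :
    Nonempty
      (((Fin 3 → ℤ) ⧸ LinearMap.range
          (Matrix.toLin' (!![-6 * (k : ℤ), 0, 0; 0, 6, 3; 0, 3, 2]))) ≃+
        (ZMod (6 * k) × ZMod 3)) := by
  set G := (!![-6 * (k : ℤ), 0, 0; 0, 6, 3; 0, 3, 2]) with hGdef
  have hG : ∀ v : Fin 3 → ℤ, Matrix.toLin' G v =
      ![(-6 * (k : ℤ)) * v 0, 6 * v 1 + 3 * v 2, 3 * v 1 + 2 * v 2] := by
    intro v
    funext i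
    fin_cases i <;>
      simp [hGdef, Matrix.toLin'_apply, Matrix.mulVec, dotProduct,
        Fin.sum_univ_three] <;> ring
  let φ : (Fin 3 → ℤ) →ₗ[ℤ] ZMod (6 * k) × ZMod 3 :=
    LinearMap.prod
      ((Int.castAddHom (ZMod (6 * k))).toIntLinearMap.comp (LinearMap.proj 0))
      ((Int.castAddHom (ZMod 3)).toIntLinearMap.comp (LinearMap.proj 1))
  have hφ : ∀ v : Fin 3 → ℤ, φ v = ((v 0 : ZMod (6 * k)), (v 1 : ZMod 3)) := fun _ => rfl
  have hker : LinearMap.ker φ = LinearMap.range (Matrix.toLin' G) := by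
    ext v
    simp only [LinearMap.mem_ker, LinearMap.mem_range]
    constructor
    · intro hv
      rw [hφ, Prod.mk_eq_zero] at hv
      obtain ⟨h0, h1⟩ := hv
      have hd0 : ((6 * k : ℕ) : ℤ) ∣ v 0 := by
        rwa [ZMod.intCast_zmod_eq_zero_iff_dvd] at h0
      have hd1 : ((3 : ℕ) : ℤ) ∣ v 1 := by
        rwa [ZMod.intCast_zmod_eq_zero_iff_dvd] at h1
      obtain ⟨m, hm⟩ := hd0
      obtain ⟨s, hs⟩ := hd1
      push_cast at hm hs
      refine ⟨![-m, 2 * s - v 2, 2 * v 2 - 3 * s], ?_⟩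
      rw [hG]
      funext i
      fin_cases i <;> simp <;> linarith
    · rintro ⟨u, rfl⟩
      rw [hG, hφ, Prod.mk_eq_zero]
      constructor
      · simp only [Matrix.cons_val_zero]
        rw [ZMod.intCast_zmod_eq_zero_iff_dvd]
        push_cast
        exact ⟨-(u 0), by ring⟩
      · simp only [Matrix.cons_val_one, Matrix.head_cons]
        rw [ZMod.intCast_zmod_eq_zero_iff_dvd]
        push_cast
        exact ⟨2 * u 1 + u 2, by ring⟩
  have hsurj : Function.Surjective φ := by
    rintro ⟨a, b⟩
    obtain ⟨a', rfl⟩ := ZMod.intCast_surjective a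
    obtain ⟨b', rfl⟩ := ZMod.intCast_surjective b
    exact ⟨![a', b', 0], by rw [hφ]; simp⟩
  exact ⟨((Submodule.quotEquivOfEq _ _ hker.symm).trans
    (φ.quotKerEquivOfSurjective hsurj)).toAddEquiv⟩
end

section
/- For every integer k' ≥ 1, the cokernel of the ℤ-linear endomorphism of (Fin 3 → ℤ) given by the matrix [[-2k', 0, 0], [0, 6, 9], [0, 9, 18]] is isomorphic, as an additive group, to ZMod (2k') × ZMod 3 × ZMod 9. -/
/-- For every integer k' ≥ 1, the cokernel of the ℤ-linear endomorphism of
`Fin 3 → ℤ` given by the matrix `[[-2k', 0, 0], [0, 6, 9], [0, 9, 18]]` is isomorphic,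
as an additive group, to `ZMod (2k') × ZMod 3 × ZMod 9`. -/
theorem stmt_2 (k' : ℕ) (hk' : 1 ≤ k') :
    Nonempty
      (((Fin 3 → ℤ) ⧸ LinearMap.range
          (Matrix.toLin' (!![-2 * (k' : ℤ), 0, 0; 0, 6, 9; 0, 9, 18]))) ≃+
        (ZMod (2 * k') × ZMod 3 × ZMod 9)) := by
  set M : Matrix (Fin 3) (Fin 3) ℤ := !![-2 * (k' : ℤ), 0, 0; 0, 6, 9; 0, 9, 18] with hM
  let g : (Fin 3 → ℤ) →+ (ZMod (2 * k') × ZMod 3 × ZMod 9) :=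
  { toFun := fun x => (((x 0 : ℤ) : ZMod (2 * k')), ((x 1 : ℤ) : ZMod 3),
      ((x 2 - 3 * x 1 : ℤ) : ZMod 9))
    map_zero' := by simp
    map_add' := by
      intro x y
      simp only [Pi.add_apply, Prod.mk_add_mk, Prod.mk.injEq]
      refine ⟨by push_cast; ring, by push_cast; ring, by push_cast; ring⟩ }
  let f : (Fin 3 → ℤ) →ₗ[ℤ] (ZMod (2 * k') × ZMod 3 × ZMod 9) := g.toIntLinearMap
  have hsurj : Function.Surjective f := by
    rintro ⟨u, v, w⟩
    obtain ⟨a, rfl⟩ := ZMod.intCast_surjective u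
    obtain ⟨b, rfl⟩ := ZMod.intCast_surjective v
    obtain ⟨c, rfl⟩ := ZMod.intCast_surjective w
    refine ⟨![a, b, c + 3 * b], ?_⟩
    have : f ![a, b, c + 3 * b] = ((a : ZMod (2 * k')), (b : ZMod 3),
        ((c + 3 * b - 3 * b : ℤ) : ZMod 9)) := rfl
    rw [this]
    norm_num
  have hker : LinearMap.range (Matrix.toLin' M) = LinearMap.ker f := by
    ext x
    constructor
    · rintro ⟨y, rfl⟩
      have h0 : Matrix.toLin' M y 0 = -2 * (k' : ℤ) * y 0 := by
        simp [Matrix.toLin'_apply, Matrix.mulVec, dotProduct, hM,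
          Fin.sum_univ_three]
      have h1 : Matrix.toLin' M y 1 = 6 * y 1 + 9 * y 2 := by
        simp [Matrix.toLin'_apply, Matrix.mulVec, dotProduct, hM,
          Fin.sum_univ_three]
      have h2 : Matrix.toLin' M y 2 = 9 * y 1 + 18 * y 2 := by
        simp [Matrix.toLin'_apply, Matrix.mulVec, dotProduct, hM,
          Fin.sum_univ_three]
      have : f (Matrix.toLin' M y) = 0 := by
        have hfx : f (Matrix.toLin' M y) = (((Matrix.toLin' M y 0 : ℤ) : ZMod (2 * k')),
            ((Matrix.toLin' M y 1 : ℤ) : ZMod 3),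
            ((Matrix.toLin' M y 2 - 3 * Matrix.toLin' M y 1 : ℤ) : ZMod 9)) := rfl
        rw [hfx, h0, h1, h2]
        refine Prod.ext ?_ (Prod.ext ?_ ?_)
        · show ((-2 * (k' : ℤ) * y 0 : ℤ) : ZMod (2 * k')) = 0
          rw [ZMod.intCast_zmod_eq_zero_iff_dvd]
          exact ⟨-(y 0), by push_cast; ring⟩
        · show (((6 * y 1 + 9 * y 2 : ℤ)) : ZMod 3) = 0
          rw [ZMod.intCast_zmod_eq_zero_iff_dvd]
          exact ⟨2 * y 1 + 3 * y 2, by push_cast; ring⟩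
        · show (((9 * y 1 + 18 * y 2 - 3 * (6 * y 1 + 9 * y 2) : ℤ)) : ZMod 9) = 0
          rw [ZMod.intCast_zmod_eq_zero_iff_dvd]
          exact ⟨-(y 1) - y 2, by push_cast; ring⟩
      exact this
    · intro hx
      have hx' : f x = 0 := hx
      have e0 : ((x 0 : ℤ) : ZMod (2 * k')) = 0 := congrArg Prod.fst hx'
      have e1 : ((x 1 : ℤ) : ZMod 3) = 0 := congrArg (Prod.fst ∘ Prod.snd) hx'
      have e2 : ((x 2 - 3 * x 1 : ℤ) : ZMod 9) = 0 := congrArg (Prod.snd ∘ Prod.snd) hx'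
      rw [ZMod.intCast_zmod_eq_zero_iff_dvd] at e0 e1 e2
      obtain ⟨a, ha⟩ := e0
      obtain ⟨b, hb⟩ := e1
      obtain ⟨c, hc⟩ := e2
      push_cast at ha
      refine ⟨![-a, -b - 3 * c, b + 2 * c], ?_⟩
      funext i
      push_cast at ha hb hc
      fin_cases i <;>
        simp [Matrix.toLin'_apply, Matrix.mulVec, dotProduct, hM,
          Fin.sum_univ_three] <;>
        first
          | linear_combination -ha
          | linear_combination -hb
          | linear_combination -hc - 3 * hb
  exact ⟨((Submodule.quotEquivOfEq _ _ hker).trans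
    (f.quotKerEquivOfSurjective hsurj)).toAddEquiv⟩
end

section
/- Let k' ≥ 1 be an integer with k' ≡ 1 (mod 3), and set k = 3k' (so k ≡ 3 (mod 9)). Then the lattice with Gram matrix [[-2k'+2, 0, 3], [0, 6, 9], [3, 9, 18]] is NOT isometric to the lattice with Gram matrix [[-6k, 0, 0], [0, 6, 3], [0, 3, 2]]. -/
/-- Two rank-3 integral lattices with Gram matrices `G₁`, `G₂` are isometric if there is
an integer matrix `P` with unit determinant such that `Pᵀ · G₁ · P = G₂`. -/
def LatticeIsometric (G₁ G₂ : Matrix (Fin 3) (Fin 3) ℤ) : Prop :=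
  ∃ P : Matrix (Fin 3) (Fin 3) ℤ, IsUnit P.det ∧ P.transpose * G₁ * P = G₂

/-- Let k' ≥ 1 with k' ≡ 1 (mod 3), and k = 3k' (so k ≡ 3 (mod 9)). Then the
lattice with Gram matrix `[[-2k'+2, 0, 3], [0, 6, 9], [3, 9, 18]]` is NOT isometric to
the lattice with Gram matrix `[[-6k, 0, 0], [0, 6, 3], [0, 3, 2]]`. -/
theorem stmt_4 (k' : ℕ) (hk' : 1 ≤ k') (h3 : k' % 3 = 1) (k : ℕ) (hk : k = 3 * k') :
    ¬ LatticeIsometric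
        !![-2 * (k' : ℤ) + 2, 0, 3; 0, 6, 9; 3, 9, 18]
        !![-6 * (k : ℤ), 0, 0; 0, 6, 3; 0, 3, 2] := by
  rintro ⟨P, -, hP⟩
  have hk1 : ((k' : ℕ) : ZMod 3) = 1 := by
    rw [← ZMod.natCast_mod, h3]
    rfl
  have h := congrArg (Matrix.map · (Int.castRingHom (ZMod 3))) hP
  simp only [Matrix.map_mul] at h
  have hG1 : (!![-2 * (k' : ℤ) + 2, 0, 3; 0, 6, 9; 3, 9, 18]).map
      (Int.castRingHom (ZMod 3)) = 0 := by
    ext i j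
    fin_cases i <;> fin_cases j <;>
      simp [Matrix.map_apply] <;>
      first
        | decide
        | (push_cast; rw [hk1]; decide)
  rw [hG1, Matrix.mul_zero, Matrix.zero_mul] at h
  have h22 := congrFun (congrFun h 2) 2
  simp [Matrix.map_apply] at h22
  exact absurd h22 (by decide)
end

section
/- Let k' ≥ 1 be an integer with k' ≡ 1 (mod 3). Then the cokernel of the ℤ-linear endomorphism of (Fin 3 → ℤ) given by the matrix [[-2k'+2, 0, 3], [0, 6, 9], [3, 9, 18]] is isomorphic, as an additive group, to (ZMod 3) × (ZMod 3) × (ZMod 3) × ZMod (2k'). -/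
/-- Let k' ≥ 1 be an integer with k' ≡ 1 (mod 3). Then the cokernel of the
ℤ-linear endomorphism of `Fin 3 → ℤ` given by the matrix
`[[-2k'+2, 0, 3], [0, 6, 9], [3, 9, 18]]` is isomorphic, as an additive group, to
`ZMod 3 × ZMod 3 × ZMod 3 × ZMod (2k')`. -/
theorem stmt_5 (k' : ℕ) (hk' : 1 ≤ k') (h3 : k' % 3 = 1) :
    Nonempty
      (((Fin 3 → ℤ) ⧸ LinearMap.range
          (Matrix.toLin' (!![-2 * (k' : ℤ) + 2, 0, 3; 0, 6, 9; 3, 9, 18]))) ≃+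
        (ZMod 3 × ZMod 3 × ZMod 3 × ZMod (2 * k'))) := by
  haveI : NeZero (2 * k') := ⟨by omega⟩
  obtain ⟨t, ht⟩ : ∃ t : ℕ, k' = 3 * t + 1 := ⟨k' / 3, by omega⟩
  have htz : (k' : ℤ) = 3 * (t : ℤ) + 1 := by exact_mod_cast ht
  set M : Matrix (Fin 3) (Fin 3) ℤ := !![-2 * (k' : ℤ) + 2, 0, 3; 0, 6, 9; 3, 9, 18] with hM
  set z : (Fin 3 → ℤ) → ℤ := fun x => x 0 - (6 * t + 1) * x 1 + 2 * t * x 2 with hz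
  have hco : Nat.Coprime 3 (2 * k') :=
    (Nat.Prime.coprime_iff_not_dvd (by norm_num)).mpr (by omega)
  set φ : (Fin 3 → ℤ) →+ ZMod 3 × ZMod 3 × ZMod 3 × ZMod (2 * k') :=
    { toFun := fun x => ((x 2 : ZMod 3), (x 1 : ZMod 3),
        ((z x : ZMod 3), (z x : ZMod (2 * k')))),
      map_zero' := by simp [hz]
      map_add' := by
        intro x y
        simp only [hz, Pi.add_apply, Prod.mk_add_mk, Prod.mk.injEq]
        refine ⟨by push_cast; ring, by push_cast; ring, by push_cast; ring, by push_cast; ring⟩ } with hφ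
  set ψ : (Fin 3 → ℤ) →ₗ[ℤ] ZMod 3 × ZMod 3 × ZMod 3 × ZMod (2 * k') :=
    φ.toIntLinearMap with hψdef
  have hψ : ∀ x : Fin 3 → ℤ, ψ x = ((x 2 : ZMod 3), (x 1 : ZMod 3),
      ((z x : ZMod 3), (z x : ZMod (2 * k')))) := fun x => rfl
  have hgcd : Int.gcd 3 ((2 * k' : ℕ) : ℤ) = 1 := by
    rw [show (3 : ℤ) = ((3 : ℕ) : ℤ) by norm_num, Int.gcd_natCast_natCast]
    exact hco
  have hsurj : Function.Surjective ψ := by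
    rintro ⟨a, b, c, d⟩
    set u : ℤ := Int.gcdA 3 ((2 * k' : ℕ) : ℤ) with hu
    set v : ℤ := Int.gcdB 3 ((2 * k' : ℕ) : ℤ) with hv
    have hbez : (1 : ℤ) = 3 * u + ((2 * k' : ℕ) : ℤ) * v := by
      have := Int.gcd_eq_gcd_ab 3 ((2 * k' : ℕ) : ℤ)
      rw [hgcd] at this
      exact_mod_cast this
    set c0 : ℤ := (c.val : ℤ) with hc0
    set d0 : ℤ := (d.val : ℤ) with hd0
    set a0 : ℤ := (a.val : ℤ) with ha0
    set b0 : ℤ := (b.val : ℤ) with hb0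
    set z0 : ℤ := c0 * (((2 * k' : ℕ) : ℤ) * v) + d0 * (3 * u) with hz0
    have hz3 : (z0 : ZMod 3) = c := by
      have hd : (3 : ℤ) ∣ z0 - c0 := ⟨d0 * u - c0 * u, by linear_combination (-c0) * hbez⟩
      have h0 : ((z0 - c0 : ℤ) : ZMod 3) = 0 := (ZMod.intCast_zmod_eq_zero_iff_dvd _ 3).mpr hd
      push_cast at h0
      have : (z0 : ZMod 3) = (c0 : ZMod 3) := by linear_combination h0
      rw [this, hc0]
      push_cast
      rw [ZMod.natCast_val, ZMod.cast_id]
    have hz2k : (z0 : ZMod (2 * k')) = d := by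
      have hd : ((2 * k' : ℕ) : ℤ) ∣ z0 - d0 := ⟨c0 * v - d0 * v, by linear_combination (-d0) * hbez⟩
      have h0 : ((z0 - d0 : ℤ) : ZMod (2 * k')) = 0 := (ZMod.intCast_zmod_eq_zero_iff_dvd _ _).mpr hd
      push_cast at h0
      have : (z0 : ZMod (2 * k')) = (d0 : ZMod (2 * k')) := by linear_combination h0
      rw [this, hd0]
      push_cast
      rw [ZMod.natCast_val, ZMod.cast_id]
    refine ⟨![z0 + (6 * t + 1) * b0 - 2 * t * a0, b0, a0], ?_⟩
    rw [hψ]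
    have hzx : z ![z0 + (6 * t + 1) * b0 - 2 * t * a0, b0, a0] = z0 := by
      simp [hz]; ring
    rw [hzx]
    have hacast : (a0 : ZMod 3) = a := by
      rw [ha0]; push_cast; rw [ZMod.natCast_val, ZMod.cast_id]
    have hbcast : (b0 : ZMod 3) = b := by
      rw [hb0]; push_cast; rw [ZMod.natCast_val, ZMod.cast_id]
    simp only [Matrix.cons_val_one, Matrix.cons_val_zero, Matrix.head_cons, Matrix.cons_val_two, Matrix.tail_cons]
    rw [hacast, hbcast, hz3, hz2k]
  have hker : LinearMap.ker ψ = LinearMap.range (Matrix.toLin' M) := by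
    apply le_antisymm
    · intro x hx
      rw [LinearMap.mem_ker, hψ, Prod.ext_iff, Prod.ext_iff, Prod.ext_iff] at hx
      obtain ⟨h2, h1, hz3, hz2k⟩ := hx
      obtain ⟨a, ha⟩ := (ZMod.intCast_zmod_eq_zero_iff_dvd _ 3).mp h2
      obtain ⟨b, hb⟩ := (ZMod.intCast_zmod_eq_zero_iff_dvd _ 3).mp h1
      have hdvd3 : (3 : ℤ) ∣ z x := (ZMod.intCast_zmod_eq_zero_iff_dvd _ 3).mp hz3
      have hdvd2k : ((2 * k' : ℕ) : ℤ) ∣ z x := (ZMod.intCast_zmod_eq_zero_iff_dvd _ _).mp hz2k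
      have hcop : IsCoprime (3 : ℤ) ((2 * k' : ℕ) : ℤ) := Int.isCoprime_iff_gcd_eq_one.mpr hgcd
      obtain ⟨m, hm⟩ := hcop.mul_dvd hdvd3 hdvd2k
      set c : ℤ := -m with hc
      have hzc : x 0 - (6 * t + 1) * x 1 + 2 * t * x 2 = -(18 * (t : ℤ) + 6) * c := by
        have : z x = 3 * ((2 * k' : ℕ) : ℤ) * m := hm
        rw [hz] at this
        simp only at this
        rw [hc]
        push_cast [htz] at this ⊢
        linear_combination this
      refine ⟨![a - 3 * b + 3 * c, -b + 3 * c, b - 2 * c], ?_⟩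
      rw [Matrix.toLin'_apply]
      funext i
      fin_cases i
      · simp [hM, Matrix.mulVec, dotProduct, Fin.sum_univ_three]
        push_cast [htz]
        linear_combination -hzc - (6 * (t : ℤ) + 1) * hb + 2 * (t : ℤ) * ha
      · simp [hM, Matrix.mulVec, dotProduct, Fin.sum_univ_three]
        linear_combination -hb
      · simp [hM, Matrix.mulVec, dotProduct, Fin.sum_univ_three]
        linear_combination -ha
    · rintro x ⟨v, rfl⟩
      rw [LinearMap.mem_ker, Matrix.toLin'_apply, hψ]
      have e0 : M.mulVec v 0 = (-2 * (k' : ℤ) + 2) * v 0 + 3 * v 2 := by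
        simp [hM, Matrix.mulVec, dotProduct, Fin.sum_univ_three]
      have e1 : M.mulVec v 1 = 6 * v 1 + 9 * v 2 := by
        simp [hM, Matrix.mulVec, dotProduct, Fin.sum_univ_three]
      have e2 : M.mulVec v 2 = 3 * v 0 + 9 * v 1 + 18 * v 2 := by
        simp [hM, Matrix.mulVec, dotProduct, Fin.sum_univ_three]
      have ez : z (M.mulVec v) = -(6 * (k' : ℤ)) * (v 1 + v 2) := by
        rw [hz]
        simp only
        rw [e0, e1, e2]
        push_cast [htz]
        ring
      rw [e1, e2, ez]
      refine Prod.ext ?_ (Prod.ext ?_ (Prod.ext ?_ ?_))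
      · exact (ZMod.intCast_zmod_eq_zero_iff_dvd _ 3).mpr ⟨v 0 + 3 * v 1 + 6 * v 2, by ring⟩
      · exact (ZMod.intCast_zmod_eq_zero_iff_dvd _ 3).mpr ⟨2 * v 1 + 3 * v 2, by ring⟩
      · exact (ZMod.intCast_zmod_eq_zero_iff_dvd _ 3).mpr ⟨-2 * (k' : ℤ) * (v 1 + v 2), by ring⟩
      · exact (ZMod.intCast_zmod_eq_zero_iff_dvd _ (2 * k')).mpr ⟨-3 * (v 1 + v 2), by push_cast; ring⟩
  exact ⟨((Submodule.quotEquivOfEq _ _ hker.symm).trans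
    (ψ.quotKerEquivOfSurjective hsurj)).toAddEquiv⟩
end

section
/- Let k' ≥ 1 be an integer with k' ≡ 2 (mod 3), and set k = 3k' (so k ≡ 6 (mod 9)). Then the lattice with Gram matrix [[-2k'+2, 0, 3], [0, 6, 9], [3, 9, 18]] is NOT isometric to the lattice with Gram matrix [[-6k, 0, 0], [0, 6, 3], [0, 3, 2]]. -/
/-- Let k' ≥ 1 with k' ≡ 2 (mod 3), and k = 3k' (so k ≡ 6 (mod 9)). Then the
lattice with Gram matrix `[[-2k'+2, 0, 3], [0, 6, 9], [3, 9, 18]]` is NOT isometric to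
the lattice with Gram matrix `[[-6k, 0, 0], [0, 6, 3], [0, 3, 2]]`. -/
theorem stmt_6 (k' : ℕ) (hk' : 1 ≤ k') (h3 : k' % 3 = 2) (k : ℕ) (hk : k = 3 * k') :
    ¬ LatticeIsometric
        !![-2 * (k' : ℤ) + 2, 0, 3; 0, 6, 9; 3, 9, 18]
        !![-6 * (k : ℤ), 0, 0; 0, 6, 3; 0, 3, 2] := by
  rintro ⟨P, hP, hEq⟩
  have hk'3 : ((k' : ℤ) : ZMod 3) = 2 := by
    push_cast
    rw [← ZMod.natCast_mod k' 3, h3]; rfl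
  have hmap := congrArg (Int.castRingHom (ZMod 3)).mapMatrix hEq
  rw [map_mul, map_mul] at hmap
  have h22 := congrFun (congrFun (congrArg (fun M => M) hmap) 2) 2
  simp only [RingHom.mapMatrix_apply, Matrix.mul_apply, Fin.sum_univ_three,
    Matrix.map_apply, Matrix.transpose_apply, Int.coe_castRingHom,
    Matrix.cons_val', Matrix.cons_val_zero, Matrix.cons_val_one, Matrix.head_cons,
    Matrix.empty_val', Matrix.cons_val_fin_one, Matrix.head_fin_const,
    Matrix.cons_val_two, Matrix.tail_cons, Matrix.of_apply] at h22
  push_cast [hk, hk'3] at h22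
  ring_nf at h22
  generalize ((P 0 2 : ℤ) : ZMod 3) = x at h22
  generalize ((P 1 2 : ℤ) : ZMod 3) = y at h22
  generalize ((P 2 2 : ℤ) : ZMod 3) = z at h22
  revert h22
  revert x y z
  decide
end

section
/- For every integer k ≥ 1, the integer matrix g = [[1, 0, 0], [0, -1, -3], [0, 1, 2]] satisfies gᵀ·Q·g = Q, where Q = [[-6k, 0, 0], [0, 6, 9], [0, 9, 18]], and g has order exactly 6: g⁶ = 1 while g² ≠ 1 and g³ ≠ 1. -/
/-- For every integer k ≥ 1, the integer matrix
`g = [[1, 0, 0], [0, -1, -3], [0, 1, 2]]` satisfies `gᵀ · Q · g = Q`, where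
`Q = [[-6k, 0, 0], [0, 6, 9], [0, 9, 18]]` is the Gram matrix of T(A)(3), and g has
order exactly 6 in M₃(ℤ): `g⁶ = 1` while `g² ≠ 1` and `g³ ≠ 1`. -/
theorem stmt_7 (k : ℕ) (hk : 1 ≤ k) :
    let g : Matrix (Fin 3) (Fin 3) ℤ := !![1, 0, 0; 0, -1, -3; 0, 1, 2]
    let Q : Matrix (Fin 3) (Fin 3) ℤ := !![-6 * (k : ℤ), 0, 0; 0, 6, 9; 0, 9, 18]
    g.transpose * Q * g = Q ∧ g ^ 6 = 1 ∧ g ^ 2 ≠ 1 ∧ g ^ 3 ≠ 1 := by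
  intro g Q
  have hg2 : g * g = !![1, 0, 0; 0, -2, -3; 0, 1, 1] := by
    ext i j
    fin_cases i <;> fin_cases j <;>
      simp [g, Matrix.mul_apply, Fin.sum_univ_succ, Matrix.vecHead, Matrix.vecTail]
  have hg3 : g * g * g = !![1, 0, 0; 0, -1, 0; 0, 0, -1] := by
    rw [hg2]
    ext i j
    fin_cases i <;> fin_cases j <;>
      simp [g, Matrix.mul_apply, Fin.sum_univ_succ, Matrix.vecHead, Matrix.vecTail]
  refine ⟨?_, ?_, ?_, ?_⟩
  · ext i j
    fin_cases i <;> fin_cases j <;>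
      simp [g, Q, Matrix.mul_apply, Matrix.transpose_apply, Fin.sum_univ_succ, Matrix.vecHead, Matrix.vecTail] <;> ring
  · have : g ^ 6 = (g * g * g) * (g * g * g) := by
      rw [show (6:ℕ) = 3 + 3 from rfl, pow_add, pow_succ, pow_two]
    rw [this, hg3]
    ext i j
    fin_cases i <;> fin_cases j <;>
      simp [Matrix.mul_apply, Fin.sum_univ_succ, Matrix.one_apply]
  · intro h
    rw [pow_two, hg2] at h
    have := congrFun (congrFun h 1) 1
    simp [Matrix.one_apply] at this
  · intro h
    rw [pow_succ, pow_two, hg3] at h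
    have := congrFun (congrFun h 1) 1
    simp [Matrix.one_apply] at this
end

section
/- Let k ≥ 1 be an integer with 3 ∣ k. Then the over-lattices L_{w₁} and L_{w₂} of L₀, where w₁ = (1/3, 0, 1/3) and w₂ = (1/3, 0, 2/3), are isomorphic: there exists a ℚ-linear map P : ℚ³ → ℚ³ with B(Px, Py) = B(x, y) for all x, y, mapping L₀ onto L₀ and L_{w₁} onto L_{w₂}. -/
/-- The Gram matrix `Q = [[-6k, 0, 0], [0, 6, 9], [0, 9, 18]]` of the lattice T(A)(3),
viewed over ℚ. -/
def gramQ (k : ℕ) : Matrix (Fin 3) (Fin 3) ℚ :=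
  !![-6 * (k : ℚ), 0, 0; 0, 6, 9; 0, 9, 18]

/-- The symmetric bilinear form `B(x, y) = xᵀ · Q · y` on ℚ³. -/
def B (k : ℕ) (x y : Fin 3 → ℚ) : ℚ :=
  dotProduct x ((gramQ k).mulVec y)

/-- The standard lattice `L₀ = ℤ³ ⊂ ℚ³`, spanned over ℤ by the standard basis. -/
def L₀ : Submodule ℤ (Fin 3 → ℚ) :=
  Submodule.span ℤ (Set.range fun i : Fin 3 => (Pi.single i 1 : Fin 3 → ℚ))

/-- The over-lattice `L_w` of `L₀` generated by `L₀` and `w ∈ ℚ³`. -/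
def OverLat (w : Fin 3 → ℚ) : Submodule ℤ (Fin 3 → ℚ) :=
  L₀ ⊔ Submodule.span ℤ {w}

/-- Two over-lattices `L_w`, `L_w'` of `L₀` are isomorphic if there is a ℚ-linear
isometry of `(ℚ³, B)` mapping `L₀` onto `L₀` and `L_w` onto `L_w'`. -/
def OverLatticesIso (k : ℕ) (w w' : Fin 3 → ℚ) : Prop :=
  ∃ P : (Fin 3 → ℚ) →ₗ[ℚ] (Fin 3 → ℚ),
    (∀ x y, B k (P x) (P y) = B k x y) ∧
    Submodule.map (P.restrictScalars ℤ) L₀ = L₀ ∧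
    Submodule.map (P.restrictScalars ℤ) (OverLat w) = OverLat w'

namespace Stmt8Aux

/-- The isometry `x ↦ (x₀, x₁ + 3 x₂, -x₂)`. -/
noncomputable def P : (Fin 3 → ℚ) →ₗ[ℚ] (Fin 3 → ℚ) :=
  Matrix.toLin' !![1, 0, 0; 0, 1, 3; 0, 0, -1]

lemma P_apply (x : Fin 3 → ℚ) : P x = ![x 0, x 1 + 3 * x 2, -x 2] := by
  funext i
  fin_cases i <;>
    simp [P, Matrix.toLin'_apply, Matrix.mulVec, dotProduct,
      Fin.sum_univ_three, Matrix.vecHead, Matrix.vecTail]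

lemma P_invol (x : Fin 3 → ℚ) : P (P x) = x := by
  rw [P_apply, P_apply]
  funext i
  fin_cases i <;> simp

lemma mem_L0 (v : Fin 3 → ℚ) (a b c : ℤ) (h0 : v 0 = a) (h1 : v 1 = b)
    (h2 : v 2 = c) : v ∈ L₀ := by
  have e0 : (Pi.single 0 1 : Fin 3 → ℚ) ∈ L₀ := Submodule.subset_span ⟨0, rfl⟩
  have e1 : (Pi.single 1 1 : Fin 3 → ℚ) ∈ L₀ := Submodule.subset_span ⟨1, rfl⟩
  have e2 : (Pi.single 2 1 : Fin 3 → ℚ) ∈ L₀ := Submodule.subset_span ⟨2, rfl⟩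
  have hv : v = a • (Pi.single 0 1 : Fin 3 → ℚ) + b • Pi.single 1 1
      + c • Pi.single 2 1 := by
    funext i
    fin_cases i <;> simp [h0, h1, h2, Pi.single_apply]
  rw [hv]
  exact add_mem (add_mem (Submodule.smul_mem _ _ e0) (Submodule.smul_mem _ _ e1))
    (Submodule.smul_mem _ _ e2)

end Stmt8Aux

/-- Let k ≥ 1 with 3 ∣ k. Then the over-lattices `L_{w₁}` and `L_{w₂}` of
`L₀`, where `w₁ = (1/3, 0, 1/3)` and `w₂ = (1/3, 0, 2/3)`, are isomorphic. -/
theorem stmt_8 (k : ℕ) (hk : 1 ≤ k) (h3 : 3 ∣ k) :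
    OverLatticesIso k ![1/3, 0, 1/3] ![1/3, 0, 2/3] := by
  classical
  set PZ := (Stmt8Aux.P.restrictScalars ℤ) with hPZ
  -- involution for submodules
  have hcomp : PZ.comp PZ = LinearMap.id := by
    ext x i
    simp [PZ, Stmt8Aux.P_invol]
  have hinv : ∀ S : Submodule ℤ (Fin 3 → ℚ), Submodule.map PZ (Submodule.map PZ S) = S := by
    intro S
    rw [← Submodule.map_comp, hcomp, Submodule.map_id]
  have key : ∀ S T : Submodule ℤ (Fin 3 → ℚ),
      Submodule.map PZ S ≤ T → Submodule.map PZ T ≤ S → Submodule.map PZ S = T := by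
    intro S T h1 h2
    refine le_antisymm h1 ?_
    have := Submodule.map_mono (f := PZ) h2
    rw [hinv] at this
    exact this
  -- map of L₀
  have hL0le : Submodule.map PZ L₀ ≤ L₀ := by
    rw [show L₀ = Submodule.span ℤ (Set.range fun i : Fin 3 => (Pi.single i 1 : Fin 3 → ℚ))
      from rfl, Submodule.map_span, Submodule.span_le]
    rintro _ ⟨_, ⟨i, rfl⟩, rfl⟩
    fin_cases i
    · exact Stmt8Aux.mem_L0 _ 1 0 0 (by simp [Stmt8Aux.P_apply, PZ])
        (by simp [Stmt8Aux.P_apply, PZ]) (by simp [Stmt8Aux.P_apply, PZ])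
    · exact Stmt8Aux.mem_L0 _ 0 1 0 (by simp [Stmt8Aux.P_apply, PZ])
        (by simp [Stmt8Aux.P_apply, PZ]) (by simp [Stmt8Aux.P_apply, PZ])
    · exact Stmt8Aux.mem_L0 _ 0 3 (-1) (by simp [Stmt8Aux.P_apply, PZ])
        (by simp [Stmt8Aux.P_apply, PZ]) (by simp [Stmt8Aux.P_apply, PZ])
  have hL0 : Submodule.map PZ L₀ = L₀ := key _ _ hL0le hL0le
  -- images of w₁ and w₂
  have hmapOver : ∀ w w' : Fin 3 → ℚ, PZ w ∈ OverLat w' →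
      Submodule.map PZ (OverLat w) ≤ OverLat w' := by
    intro w w' hw
    rw [OverLat, Submodule.map_sup, Submodule.map_span, Set.image_singleton]
    refine sup_le (hL0le.trans le_sup_left) ?_
    rw [Submodule.span_le, Set.singleton_subset_iff]
    exact hw
  have hw1 : PZ ![1/3, 0, 1/3] ∈ OverLat ![1/3, 0, 2/3] := by
    have : PZ ![1/3, 0, 1/3] = ![1/3, 0, 2/3] + ![(0:ℚ), 1, -1] := by
      show Stmt8Aux.P ![1/3, 0, 1/3] = _
      rw [Stmt8Aux.P_apply]
      funext i
      fin_cases i <;> norm_num [Matrix.cons_val_two, Matrix.vecHead, Matrix.vecTail]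
    rw [this]
    exact add_mem (le_sup_right (α := Submodule ℤ (Fin 3 → ℚ))
        (Submodule.mem_span_singleton_self _))
      (le_sup_left (α := Submodule ℤ (Fin 3 → ℚ))
        (Stmt8Aux.mem_L0 _ 0 1 (-1) (by norm_num) (by norm_num) (by rfl)))
  have hw2 : PZ ![1/3, 0, 2/3] ∈ OverLat ![1/3, 0, 1/3] := by
    have : PZ ![1/3, 0, 2/3] = ![1/3, 0, 1/3] + ![(0:ℚ), 2, -1] := by
      show Stmt8Aux.P ![1/3, 0, 2/3] = _
      rw [Stmt8Aux.P_apply]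
      funext i
      fin_cases i <;> norm_num [Matrix.cons_val_two, Matrix.vecHead, Matrix.vecTail]
    rw [this]
    exact add_mem (le_sup_right (α := Submodule ℤ (Fin 3 → ℚ))
        (Submodule.mem_span_singleton_self _))
      (le_sup_left (α := Submodule ℤ (Fin 3 → ℚ))
        (Stmt8Aux.mem_L0 _ 0 2 (-1) (by norm_num) (by norm_num) (by rfl)))
  refine ⟨Stmt8Aux.P, ?_, hL0, key _ _ (hmapOver _ _ hw1) (hmapOver _ _ hw2)⟩
  intro x y
  simp [B, gramQ, Stmt8Aux.P_apply, Matrix.mulVec, dotProduct,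
    Fin.sum_univ_three, Matrix.vecHead, Matrix.vecTail]
  ring
end

section
/- Let k' ≥ 0 be an integer and k = 3k' + 1. Then the cokernel of the ℤ-linear endomorphism of (Fin 3 → ℤ) given by the matrix [[-2k', 1, 0], [1, 6, 9], [0, 9, 18]] is a cyclic group, isomorphic as an additive group to ZMod (18k). -/
private def aux9 (k' : ℕ) : (Fin 3 → ℤ) →ₗ[ℤ] ZMod (18 * (3 * k' + 1)) where
  toFun x := ((9 * x 0 + 18 * (k' : ℤ) * x 1 + (1 - 6 * (k' : ℤ)) * x 2 : ℤ)
      : ZMod (18 * (3 * k' + 1)))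
  map_add' x y := by simp only [Pi.add_apply]; push_cast; ring
  map_smul' c x := by
    simp only [Pi.smul_apply, smul_eq_mul, RingHom.id_apply, zsmul_eq_mul]
    push_cast; ring

private lemma aux9_cast (k' : ℕ) : ((18 * (3 * k' + 1) : ℕ) : ℤ)
    = 18 * (3 * (k' : ℤ) + 1) := by push_cast; ring

private lemma aux9_surj (k' : ℕ) : Function.Surjective (aux9 k') := by
  intro c
  obtain ⟨z, rfl⟩ := ZMod.intCast_surjective c
  refine ⟨z • ![4 * (k' : ℤ) ^ 2, 0, 1 + 6 * (k' : ℤ)], ?_⟩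
  show ((_ : ℤ) : ZMod (18 * (3 * k' + 1))) = _
  congr 1
  simp only [Pi.smul_apply, smul_eq_mul]
  simp [Matrix.cons_val_zero, Matrix.cons_val_one]
  ring

private lemma aux9_ker (k' : ℕ) : LinearMap.ker (aux9 k')
    = LinearMap.range (Matrix.toLin' (!![-2 * (k' : ℤ), 1, 0; 1, 6, 9; 0, 9, 18])) := by
  apply le_antisymm
  · intro x hx
    have hx0 : ((9 * x 0 + 18 * (k' : ℤ) * x 1 + (1 - 6 * (k' : ℤ)) * x 2 : ℤ)
        : ZMod (18 * (3 * k' + 1))) = 0 := hx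
    rw [ZMod.intCast_zmod_eq_zero_iff_dvd] at hx0
    obtain ⟨t, ht⟩ := hx0
    rw [aux9_cast] at ht
    refine ⟨![ (18 * (k' : ℤ) + 3) * x 0 + (36 * (k' : ℤ) ^ 2 + 6 * (k' : ℤ) + 1) * x 1
          - 12 * (k' : ℤ) ^ 2 * x 2
          + t * (-(108 * (k' : ℤ) ^ 2) - 54 * (k' : ℤ) - 9),
        (6 * (k' : ℤ) + 1) * x 0 + (12 * (k' : ℤ) ^ 2 + 2 * (k' : ℤ)) * x 1
          - 4 * (k' : ℤ) ^ 2 * x 2 + t * (-(36 * (k' : ℤ) ^ 2) - 18 * (k' : ℤ)),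
        -((6 * (k' : ℤ) + 1) * x 0 + (12 * (k' : ℤ) ^ 2 + 2 * (k' : ℤ)) * x 1
          - 4 * (k' : ℤ) ^ 2 * x 2) + t * (36 * (k' : ℤ) ^ 2 + 18 * (k' : ℤ) + 1) ], ?_⟩
    rw [Matrix.toLin'_apply]
    funext i
    fin_cases i
    · simp [Matrix.mulVec, dotProduct, Fin.sum_univ_succ]
      linear_combination (-(4 * (k' : ℤ) ^ 2)) * ht
    · simp [Matrix.mulVec, dotProduct, Fin.sum_univ_succ]
      ring
    · simp [Matrix.mulVec, dotProduct, Fin.sum_univ_succ]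
      linear_combination (-(1 + 6 * (k' : ℤ))) * ht
  · rintro _ ⟨y, rfl⟩
    rw [LinearMap.mem_ker]
    show (((9 : ℤ) * _ + 18 * (k' : ℤ) * _ + (1 - 6 * (k' : ℤ)) * _ : ℤ)
        : ZMod (18 * (3 * k' + 1))) = 0
    rw [ZMod.intCast_zmod_eq_zero_iff_dvd]
    refine ⟨y 1 + y 2, ?_⟩
    rw [aux9_cast, Matrix.toLin'_apply]
    simp [Matrix.mulVec, dotProduct, Fin.sum_univ_succ]
    ring

/-- Let k' ≥ 0 be an integer and k = 3k' + 1. Then the cokernel of the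
ℤ-linear endomorphism of `Fin 3 → ℤ` given by the matrix
`[[-2k', 1, 0], [1, 6, 9], [0, 9, 18]]` is a cyclic group, isomorphic as an additive
group to `ZMod (18k)`. -/
theorem stmt_9 (k' : ℕ) :
    Nonempty
      (((Fin 3 → ℤ) ⧸ LinearMap.range
          (Matrix.toLin' (!![-2 * (k' : ℤ), 1, 0; 1, 6, 9; 0, 9, 18]))) ≃+
        ZMod (18 * (3 * k' + 1))) := by
  exact ⟨((Submodule.quotEquivOfEq _ _ (aux9_ker k').symm).trans
    ((aux9 k').quotKerEquivOfSurjective (aux9_surj k'))).toAddEquiv⟩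
end

section
/- Let k' ≥ 0 be an integer and k = 3k' + 1 (so k ≡ 1 (mod 3)). Then the lattice with Gram matrix [[-2k', 1, 0], [1, 6, 9], [0, 9, 18]] is NOT isometric to the lattice with Gram matrix [[-6k, 0, 0], [0, 6, 3], [0, 3, 2]]. -/
/-- Let k' ≥ 0 and k = 3k' + 1 (so k ≡ 1 (mod 3)). Then the lattice with
Gram matrix `[[-2k', 1, 0], [1, 6, 9], [0, 9, 18]]` is NOT isometric to the lattice with
Gram matrix `[[-6k, 0, 0], [0, 6, 3], [0, 3, 2]]`. -/
theorem stmt_10 (k' : ℕ) (k : ℕ) (hk : k = 3 * k' + 1) :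
    ¬ LatticeIsometric
        !![-2 * (k' : ℤ), 1, 0; 1, 6, 9; 0, 9, 18]
        !![-6 * (k : ℤ), 0, 0; 0, 6, 3; 0, 3, 2] := by
  rintro ⟨P, hdet, hP⟩
  set G₁ : Matrix (Fin 3) (Fin 3) ℤ := !![-2 * (k' : ℤ), 1, 0; 1, 6, 9; 0, 9, 18] with hG₁
  set G₂ : Matrix (Fin 3) (Fin 3) ℤ := !![-6 * (k : ℤ), 0, 0; 0, 6, 3; 0, 3, 2] with hG₂
  set v : Fin 3 → ℤ := ![1, 2 - 2 * (k' : ℤ), 0] with hv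
  set w : Fin 3 → ℤ := Matrix.mulVec P⁻¹ v with hw
  have hPw : Matrix.mulVec P w = v := by
    rw [hw, Matrix.mulVec_mulVec, Matrix.mul_nonsing_inv _ hdet, Matrix.one_mulVec]
  have key : dotProduct w (Matrix.mulVec G₂ w) = dotProduct v (Matrix.mulVec G₁ v) := by
    conv_rhs => rw [← hPw]
    rw [← hP, ← Matrix.mulVec_mulVec, ← Matrix.mulVec_mulVec,
      Matrix.dotProduct_mulVec, Matrix.vecMul_transpose]
  have hw1 : dotProduct w (Matrix.mulVec G₂ w)
      = -6 * k * (w 0)^2 + 6 * (w 1)^2 + 6 * (w 1) * (w 2) + 2 * (w 2)^2 := by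
    simp [hG₂, dotProduct, Matrix.mulVec, Fin.sum_univ_three, Matrix.vecHead, Matrix.vecTail]
    ring
  have hv1 : dotProduct v (Matrix.mulVec G₁ v) = 4 - 6 * (k' : ℤ) + 6 * (2 - 2 * (k' : ℤ))^2 := by
    simp [hG₁, hv, dotProduct, Matrix.mulVec, Fin.sum_univ_three]
    ring
  rw [hw1, hv1] at key
  have h2 : ∀ c : ZMod 3, 2 * c ^ 2 ≠ 1 := by decide
  apply h2 ((w 2 : ℤ) : ZMod 3)
  have := congrArg (fun n : ℤ => (n : ZMod 3)) key
  push_cast at this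
  have h3 : ((3 : ℕ) : ZMod 3) = 0 := by decide
  push_cast at h3
  linear_combination this + (2 * (k : ZMod 3) * ((w 0 :ℤ):ZMod 3)^2
    - 2 * ((w 1:ℤ):ZMod 3)^2 - 2 * ((w 1:ℤ):ZMod 3) * ((w 2:ℤ):ZMod 3)
    + 1 - 2 * (k' : ZMod 3) + 2 * (2 - 2*(k' : ZMod 3))^2) * h3
end

section
/- Let k ≥ 1 be an integer and Q₁ = [[-6k, 0, 0], [0, 6, 3], [0, 3, 2]]. If P ∈ M₃(ℤ) satisfies Pᵀ·Q₁·P = Q₁ and IsUnit (det P), then the entries P₍₂,₀₎ and P₍₂,₁₎ of the third row of P are divisible by 3; consequently P maps the submodule T₁ = {v ∈ ℤ³ : 3 ∣ v₂} (vectors whose third coordinate is divisible by 3) into itself. -/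
/-- Let k ≥ 1 and `Q₁ = [[-6k, 0, 0], [0, 6, 3], [0, 3, 2]]` (the Gram
matrix of T(X)). If `P ∈ M₃(ℤ)` satisfies `Pᵀ · Q₁ · P = Q₁` and `IsUnit P.det`, then
the third-row entries `P 2 0` and `P 2 1` are divisible by 3; consequently `P` maps the
submodule `T₁ = {v : 3 ∣ v 2}` (vectors whose third coordinate is divisible by 3) into
itself. -/
theorem stmt_11 (k : ℕ) (hk : 1 ≤ k) (P : Matrix (Fin 3) (Fin 3) ℤ)
    (hdet : IsUnit P.det)
    (hP : P.transpose * !![-6 * (k : ℤ), 0, 0; 0, 6, 3; 0, 3, 2] * P =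
      !![-6 * (k : ℤ), 0, 0; 0, 6, 3; 0, 3, 2]) :
    (3 ∣ P 2 0 ∧ 3 ∣ P 2 1) ∧
      ∀ v : Fin 3 → ℤ, 3 ∣ v 2 → 3 ∣ P.mulVec v 2 := by
  have h00 := congrFun (congrFun hP 0) 0
  have h11 := congrFun (congrFun hP 1) 1
  simp [Matrix.mul_apply, Fin.sum_univ_three] at h00 h11
  ring_nf at h00 h11
  have hp : Prime (3 : ℤ) := by norm_num
  have hd0 : (3 : ℤ) ∣ 2 * P 2 0 ^ 2 :=
    ⟨-(2 * (k : ℤ)) + 2 * (k : ℤ) * P 0 0 ^ 2 - 2 * P 1 0 * P 2 0 - 2 * P 1 0 ^ 2, by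
      linarith⟩
  have hd1 : (3 : ℤ) ∣ 2 * P 2 1 ^ 2 :=
    ⟨2 + 2 * (k : ℤ) * P 0 1 ^ 2 - 2 * P 1 1 * P 2 1 - 2 * P 1 1 ^ 2, by linarith⟩
  have h20 : (3 : ℤ) ∣ P 2 0 :=
    hp.dvd_of_dvd_pow ((hp.dvd_mul.mp hd0).resolve_left (by norm_num))
  have h21 : (3 : ℤ) ∣ P 2 1 :=
    hp.dvd_of_dvd_pow ((hp.dvd_mul.mp hd1).resolve_left (by norm_num))
  refine ⟨⟨h20, h21⟩, fun v hv => ?_⟩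
  have : P.mulVec v 2 = P 2 0 * v 0 + P 2 1 * v 1 + P 2 2 * v 2 := by
    simp [Matrix.mulVec, dotProduct, Fin.sum_univ_three]
  rw [this]
  exact dvd_add (dvd_add (h20.mul_right _) (h21.mul_right _)) (Dvd.dvd.mul_left hv _)
end

section
/- Let a ≥ 1 be an integer and let u be an even integer coprime to 3. Then the torsion quadratic module (u/3^a) is isometric to (2/3^a) or to (4/3^a), and the modules (2/3^a) and (4/3^a) are not isometric to each other. -/
/-- The torsion quadratic module `(u/v)`: the quadratic form `ZMod v → ℚ/2ℤ`
sending `x` to the class of `u · x.val² / v`. -/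
def tqf (u : ℤ) (v : ℕ) (x : ZMod v) : AddCircle (2 : ℚ) :=
  (((u : ℚ) * (x.val : ℚ) ^ 2 / (v : ℚ) : ℚ) : AddCircle (2 : ℚ))

/-- The torsion quadratic modules `(u/v)` and `(u'/v)` are isometric if there is an
additive automorphism `ψ` of `ZMod v` with `q_{u',v}(x) = q_{u,v}(ψ x)` for all `x`. -/
def TqfIsometric (u u' : ℤ) (v : ℕ) : Prop :=
  ∃ ψ : ZMod v ≃+ ZMod v, ∀ x, tqf u' v x = tqf u v (ψ x)


lemma addcircle_key (u u' : ℤ) (hu : Even u) (hu' : Even u') (v : ℕ) (hv : Odd v)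
    (hv0 : v ≠ 0) (m n : ℤ)
    (h : (u' : ZMod v) * (n : ZMod v)^2 = (u : ZMod v) * (m : ZMod v)^2) :
    (((u' * n^2 / v : ℚ)) : AddCircle (2:ℚ)) = ((u * m^2 / v : ℚ) : AddCircle (2:ℚ)) := by
  rw [QuotientAddGroup.eq_iff_sub_mem]
  have hdvd : (v:ℤ) ∣ (u' * n^2 - u * m^2) := by
    rw [← ZMod.intCast_zmod_eq_zero_iff_dvd]
    push_cast
    rw [h]; ring
  obtain ⟨B, hB⟩ := hdvd
  have hBe : Even B := by
    rcases Int.even_or_odd B with h2 | h2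
    · exact h2
    · exfalso
      have ho : Odd (u' * n^2 - u * m^2) := by
        rw [hB]; exact (Int.odd_coe_nat v |>.mpr hv).mul h2
      have he : Even (u' * n^2 - u * m^2) :=
        Even.sub (hu'.mul_right _) (hu.mul_right _)
      exact Int.not_odd_iff_even.mpr he ho
  obtain ⟨C, hC⟩ := hBe
  have hvQ : (v:ℚ) ≠ 0 := by exact_mod_cast hv0
  have : (u' * n^2 / v - u * m^2 / v : ℚ) = (2*C : ℤ) := by
    field_simp
    rw [show ((u':ℚ) * n^2 - u * m^2) = ((u' * n^2 - u * m^2 : ℤ) : ℚ) by push_cast; ring]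
    rw [hB, hC]; push_cast; ring
  rw [this]
  exact ⟨C, by push_cast [zsmul_eq_mul]; ring⟩

lemma tqf_eq (u : ℤ) (v : ℕ) (x : ZMod v) :
    tqf u v x = (((u * (x.val : ℤ)^2 / v : ℚ)) : AddCircle (2:ℚ)) := by
  unfold tqf
  norm_cast

lemma natCast_val_cast {v : ℕ} [NeZero v] (x : ZMod v) :
    (((x.val : ℤ)) : ZMod v) = x := by
  push_cast
  simp [ZMod.natCast_val, ZMod.cast_id]

lemma iso_of_sq (u u' : ℤ) (hu : Even u) (hu' : Even u') (v : ℕ) (hv : Odd v)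
    [NeZero v] (f : (ZMod v)ˣ) (h : (u' : ZMod v) = (u : ZMod v) * (f : ZMod v)^2) :
    TqfIsometric u u' v := by
  refine ⟨AddAut.mulLeft f, fun x => ?_⟩
  rw [tqf_eq, tqf_eq]
  apply addcircle_key u u' hu hu' v hv (NeZero.ne v)
  rw [natCast_val_cast, natCast_val_cast]
  have : (AddAut.mulLeft f) x = (f : ZMod v) * x := rfl
  change (u' : ZMod v) * x ^ 2 = (u : ZMod v) * ((f : ZMod v) * x) ^ 2; rw [h]; ring


-- Hensel lifting for squares mod 3^a
lemma lift_sq (a : ℕ) (ha : 1 ≤ a) (x : ℤ) (hx : x ≡ 1 [ZMOD 3]) :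
    ∃ c : ℤ, x ≡ c ^ 2 [ZMOD 3 ^ a] := by
  induction a, ha using Nat.le_induction with
  | base => exact ⟨1, by simpa using hx⟩
  | succ a ha ih =>
    obtain ⟨c, hc⟩ := ih
    obtain ⟨k, hk⟩ : (3:ℤ) ^ a ∣ c ^ 2 - x := hc.dvd
    have hc3 : (3:ℤ) ∣ c ^ 2 - 1 := by
      have h1 : x ≡ c ^ 2 [ZMOD 3] := hc.of_dvd (dvd_pow_self 3 (by omega))
      exact (hx.symm.trans h1).dvd
    obtain ⟨d, hd⟩ := hc3
    set t : ℤ := 2 * c * k with ht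
    have h3 : (3:ℤ) ∣ k - 2 * c * t := by
      refine ⟨-(k*d) - k*c^2, ?_⟩
      have : k - 2*c*t = -(k * (c^2-1)) - 3*(k*c^2) := by rw [ht]; ring
      rw [this, hd]; ring
    obtain ⟨s, hs⟩ := h3
    refine ⟨c - 3 ^ a * t, Int.ModEq.symm ((Int.modEq_iff_dvd).mpr ?_).symm⟩
    have key : (c - 3 ^ a * t) ^ 2 - x = 3 ^ (a+1) * s + 3 ^ a * 3 ^ a * t ^ 2 := by
      have e1 : (c - 3^a*t)^2 - x = 3^a * (k - 2*c*t) + 3^a*3^a*t^2 := by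
        nlinarith [hk]
      rw [e1, hs]; ring
    rw [key]
    have h1 : (3:ℤ)^(a+1) ∣ 3 ^ (a+1) * s := ⟨s, rfl⟩
    have h2 : (3:ℤ)^(a+1) ∣ 3 ^ a * 3 ^ a * t ^ 2 := by
      refine Dvd.dvd.mul_right ?_ _
      rw [← pow_add]
      exact pow_dvd_pow 3 (by omega)
    exact dvd_add h1 h2

lemma two_not_sq (a : ℕ) (ha : 1 ≤ a) (c : ZMod (3^a)) : c^2 ≠ 2 := by
  intro h
  have h3 : (3:ℕ) ∣ 3 ^ a := dvd_pow_self 3 (by omega)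
  have := congrArg (ZMod.castHom h3 (ZMod 3)) h
  rw [map_pow] at this
  revert this
  generalize (ZMod.castHom h3 (ZMod 3)) c = d
  have h2 : (ZMod.castHom h3 (ZMod 3)) 2 = 2 := map_ofNat _ 2
  rw [h2]
  revert d; decide

lemma isUnit_cast {v : ℕ} (m : ℤ) (h : IsCoprime m (v:ℤ)) : IsUnit ((m : ZMod v)) := by
  obtain ⟨x, y, hxy⟩ := h
  apply IsUnit.of_mul_eq_one (x : ZMod v)
  have : ((x * m + y * v : ℤ) : ZMod v) = 1 := by rw [hxy]; norm_num
  push_cast at this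
  rw [ZMod.natCast_self] at this
  rw [mul_comm]
  simpa using this

/-- Let a ≥ 1 and let u be an even integer coprime to 3. Then the torsion
quadratic module `(u/3^a)` is isometric to `(2/3^a)` or to `(4/3^a)`, and `(2/3^a)` and
`(4/3^a)` are not isometric to each other. -/
theorem stmt_17 (a : ℕ) (ha : 1 ≤ a) (u : ℤ) (hu : Even u) (hcop : IsCoprime u 3) :
    (TqfIsometric u 2 (3 ^ a) ∨ TqfIsometric u 4 (3 ^ a)) ∧
      ¬ TqfIsometric 2 4 (3 ^ a) := by
  set v : ℕ := 3 ^ a with hv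
  haveI : NeZero v := ⟨pow_ne_zero _ (by norm_num)⟩
  have hvodd : Odd v := Odd.pow ⟨1, by norm_num⟩
  have hv1 : 1 < v := by
    calc 1 < 3 ^ 1 := by norm_num
    _ ≤ 3 ^ a := Nat.pow_le_pow_right (by norm_num) ha
  have hvZ : ((3:ℤ)^a) = ((v : ℕ) : ℤ) := by push_cast [hv]; ring
  -- units
  have hcop2 : IsCoprime (2:ℤ) ((v:ℕ):ℤ) := by
    rw [← hvZ]
    exact (by norm_num [Int.isCoprime_iff_gcd_eq_one] : IsCoprime (2:ℤ) 3).pow_right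
  have hU2 : IsUnit ((2:ℤ) : ZMod v) := isUnit_cast 2 hcop2
  obtain ⟨U2, hU2e⟩ := hU2
  have hU2e' : (U2 : ZMod v) = (2 : ZMod v) := by rw [hU2e]; norm_num
  have hcopu : IsCoprime u ((v:ℕ):ℤ) := by rw [← hvZ]; exact hcop.pow_right
  have hUu : IsUnit ((u:ℤ) : ZMod v) := isUnit_cast u hcopu
  -- u mod 3
  have h3u : ¬ (3:ℤ) ∣ u := by
    intro hd
    have : IsUnit (3:ℤ) := hcop.isUnit_of_dvd' hd dvd_rfl
    norm_num [Int.isUnit_iff] at this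
  have hmod : u % 3 = 1 ∨ u % 3 = 2 := by omega
  constructor
  · rcases hmod with h1 | h2
    · -- u ≡ 1 mod 3 : u is a square, isometric to (4/3^a)
      right
      obtain ⟨c, hc⟩ := lift_sq a ha u (by unfold Int.ModEq; omega)
      have hcv : (u : ZMod v) = (c : ZMod v)^2 := by
        have := (ZMod.intCast_eq_intCast_iff _ _ _).mpr (by rwa [← hvZ] : u ≡ c^2 [ZMOD ((v:ℕ):ℤ)])
        push_cast at this ⊢; exact this
      have hcu : IsUnit ((c : ℤ) : ZMod v) := by
        rw [hcv, sq] at hUu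
        exact isUnit_of_mul_isUnit_left hUu
      obtain ⟨C, hCe⟩ := hcu
      refine iso_of_sq u 4 hu ⟨2, by norm_num⟩ v hvodd (C⁻¹ * U2) ?_
      have : ((u:ZMod v)) * ((C⁻¹ * U2 : (ZMod v)ˣ) : ZMod v)^2
          = ((C:ZMod v))^2 * ((C⁻¹:(ZMod v)ˣ):ZMod v)^2 * ((U2:ZMod v))^2 := by
        rw [hcv, hCe]; push_cast; ring
      rw [this, ← Units.val_pow_eq_pow_val, ← Units.val_pow_eq_pow_val, ← Units.val_mul,
        ← mul_pow, mul_inv_cancel, one_pow, Units.val_one, one_mul,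
        ← Units.val_pow_eq_pow_val]
      rw [show U2^2 = U2*U2 from sq U2, Units.val_mul, hU2e']
      norm_num
    · -- u ≡ 2 mod 3 : 2u is a square, isometric to (2/3^a)
      left
      obtain ⟨c, hc⟩ := lift_sq a ha (2*u) (by unfold Int.ModEq at *; omega)
      have hcv : (2 : ZMod v) * (u : ZMod v) = (c : ZMod v)^2 := by
        have := (ZMod.intCast_eq_intCast_iff _ _ _).mpr
          (by rwa [← hvZ] : 2*u ≡ c^2 [ZMOD ((v:ℕ):ℤ)])
        push_cast at this ⊢; exact this
      have hcu : IsUnit ((c : ℤ) : ZMod v) := by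
        have : IsUnit ((2:ZMod v) * (u:ZMod v)) := by
          have h' := (isUnit_cast 2 hcop2).mul hUu
          push_cast at h'
          exact h'
        rw [hcv, sq] at this
        exact isUnit_of_mul_isUnit_left this
      obtain ⟨C, hCe⟩ := hcu
      refine iso_of_sq u 2 hu ⟨1, by norm_num⟩ v hvodd (U2 * C⁻¹) ?_
      -- show 2 = u * (2 c⁻¹)^2 ; multiply both sides by the unit 2
      have key : (2 : ZMod v) * (2 : ZMod v)
          = (2:ZMod v) * ((u:ZMod v) * ((U2 * C⁻¹ : (ZMod v)ˣ) : ZMod v)^2) := by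
        have e1 : (2:ZMod v) * ((u:ZMod v) * ((U2 * C⁻¹ : (ZMod v)ˣ) : ZMod v)^2)
            = ((C:ZMod v))^2 * ((C⁻¹:(ZMod v)ˣ):ZMod v)^2 * ((U2:ZMod v))^2 := by
          rw [show (2:ZMod v) * ((u:ZMod v) * ((U2 * C⁻¹ : (ZMod v)ˣ) : ZMod v)^2)
              = ((2:ZMod v) * (u:ZMod v)) * ((U2 * C⁻¹ : (ZMod v)ˣ) : ZMod v)^2 by ring,
            hcv, hCe]
          push_cast; ring
        rw [e1, ← Units.val_pow_eq_pow_val, ← Units.val_pow_eq_pow_val, ← Units.val_mul,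
          ← mul_pow, mul_inv_cancel, one_pow, Units.val_one, one_mul,
          ← Units.val_pow_eq_pow_val, show U2^2 = U2*U2 from sq U2, Units.val_mul, hU2e']
      have h2u : IsUnit (2 : ZMod v) := by rw [← hU2e']; exact U2.isUnit
      have hfin := h2u.mul_left_cancel key
      push_cast at hfin ⊢
      linear_combination hfin
  · -- (2/3^a) and (4/3^a) are not isometric
    rintro ⟨ψ, hψ⟩
    have h1 := hψ 1
    rw [tqf_eq, tqf_eq] at h1
    rw [QuotientAddGroup.eq_iff_sub_mem] at h1
    obtain ⟨k, hk⟩ := (AddSubgroup.mem_zmultiples_iff).mp h1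
    rw [zsmul_eq_mul] at hk
    set W : ℕ := (ψ 1).val with hW
    have hval1 : ((1 : ZMod v).val : ℤ) = 1 := by
      have h0 : (1 : ZMod v).val = 1 := by
        rw [ZMod.val_one_eq_one_mod]; exact Nat.mod_eq_of_lt hv1
      exact_mod_cast h0
    rw [hval1] at hk
    have hvQ : ((v:ℕ):ℚ) ≠ 0 := by exact_mod_cast (NeZero.ne v)
    have hkZ : (4 : ℤ) - 2 * (W:ℤ)^2 = (k * 2) * v := by
      have : ((4 : ℤ) - 2 * (W:ℤ)^2 : ℚ) = ((k * 2) * v : ℚ) := by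
        push_cast
        field_simp at hk
        push_cast at hk; linarith [hk]
      exact_mod_cast this
    have hdvd : ((v:ℕ):ℤ) ∣ 2 - (W:ℤ)^2 := ⟨k, by linarith [hkZ]⟩
    have hsq : ((W : ℕ) : ZMod v)^2 = 2 := by
      have h0 := (ZMod.intCast_zmod_eq_zero_iff_dvd _ _).mpr hdvd
      push_cast at h0
      linear_combination -h0
    exact two_not_sq a ha _ hsq
end

section
/- Let v ≥ 1 be an integer and let u, u' be integers coprime to v such that u or v is even and u' or v is even. Then the torsion quadratic modules (u/v) and (u'/v) are isometric if and only if there exists an integer w coprime to v such that u' ≡ u·w² (mod 2v). -/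
lemma par_dvd (u : ℤ) (v : ℕ) (hpar : Even u ∨ Even v) (a b : ℤ) (h : (v:ℤ) ∣ a - b) :
    (2 * (v:ℤ)) ∣ u * (a^2 - b^2) := by
  obtain ⟨k, hk⟩ := h
  rcases hpar with ⟨t, ht⟩ | ⟨t, ht⟩
  · exact ⟨t * (k * (a + b)), by rw [show a^2 - b^2 = (a-b)*(a+b) by ring, hk, ht]; ring⟩
  · have hv : (v:ℤ) = 2 * t := by exact_mod_cast congrArg Nat.cast ht |>.trans (by push_cast; ring)
    exact ⟨u * k * ((t:ℤ) * k + b), by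
      rw [show a^2 - b^2 = (a-b)*((a-b) + 2*b) by ring, hk, hv]; ring⟩

lemma coe_div_eq (v : ℕ) (hv : 0 < v) (a b : ℤ) (h : (2*(v:ℤ)) ∣ a - b) :
    (((a:ℚ)/(v:ℚ) : ℚ) : AddCircle (2:ℚ)) = (((b:ℚ)/(v:ℚ) : ℚ) : AddCircle (2:ℚ)) := by
  obtain ⟨k, hk⟩ := h
  have hv' : (v:ℚ) ≠ 0 := by exact_mod_cast hv.ne'
  rw [QuotientAddGroup.eq_iff_sub_mem]
  refine AddSubgroup.mem_zmultiples_iff.mpr ⟨k, ?_⟩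
  have : (a:ℚ) - b = 2 * v * k := by exact_mod_cast hk
  rw [zsmul_eq_mul]
  field_simp
  linarith

lemma dvd_of_coe_eq (v : ℕ) (hv : 0 < v) (a b : ℤ)
    (h : (((a:ℚ)/(v:ℚ) : ℚ) : AddCircle (2:ℚ)) = (((b:ℚ)/(v:ℚ) : ℚ) : AddCircle (2:ℚ))) :
    (2*(v:ℤ)) ∣ a - b := by
  rw [QuotientAddGroup.eq_iff_sub_mem] at h
  obtain ⟨k, hk⟩ := AddSubgroup.mem_zmultiples_iff.mp h
  have hv' : (v:ℚ) ≠ 0 := by exact_mod_cast hv.ne'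
  rw [zsmul_eq_mul] at hk
  refine ⟨k, ?_⟩
  have : (a:ℚ) - b = 2 * v * k := by field_simp at hk ⊢; linarith
  exact_mod_cast this

lemma tqf_intCast (u : ℤ) (v : ℕ) (hv : 0 < v) (hpar : Even u ∨ Even v) (n : ℤ) :
    tqf u v (n : ZMod v) = (((u * n^2 : ℤ) : ℚ) / (v:ℚ) : ℚ) := by
  haveI : NeZero v := ⟨hv.ne'⟩
  have hm : (v:ℤ) ∣ (((n : ZMod v)).val : ℤ) - n := by
    rw [ZMod.val_intCast]
    exact ⟨-(n / v), by rw [Int.emod_def]; ring⟩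
  have key := coe_div_eq v hv (u * (((n : ZMod v)).val : ℤ)^2) (u * n^2)
    (by have := par_dvd u v hpar _ _ hm; rw [mul_sub] at this; exact this)
  rw [← key]
  unfold tqf
  norm_cast

/-- Let v ≥ 1 and let u, u' be integers coprime to v such that u or v is
even and u' or v is even. Then `(u/v)` and `(u'/v)` are isometric if and only if there
exists an integer w coprime to v with `u' ≡ u·w² (mod 2v)`. -/
theorem stmt_18 (v : ℕ) (hv : 1 ≤ v) (u u' : ℤ)
    (hu : IsCoprime u (v : ℤ)) (hu' : IsCoprime u' (v : ℤ))
    (hpar : Even u ∨ Even v) (hpar' : Even u' ∨ Even v) :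
    TqfIsometric u u' v ↔
      ∃ w : ℤ, IsCoprime w (v : ℤ) ∧ u' ≡ u * w ^ 2 [ZMOD (2 * (v : ℤ))] := by
  have hv0 : 0 < v := hv
  haveI : NeZero v := ⟨hv0.ne'⟩
  rcases eq_or_lt_of_le hv with hv1 | hv2
  · -- v = 1
    subst hv1
    have hu2 : Even u := hpar.resolve_right (by decide)
    have hu2' : Even u' := hpar'.resolve_right (by decide)
    constructor
    · intro _
      refine ⟨1, isCoprime_one_left, ?_⟩
      rw [Int.modEq_iff_dvd]
      obtain ⟨s, hs⟩ := hu2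
      obtain ⟨t, ht⟩ := hu2'
      exact ⟨s - t, by rw [hs, ht]; ring⟩
    · intro _
      refine ⟨AddEquiv.refl _, fun x => ?_⟩
      have hx0 : x = 0 := Subsingleton.elim x 0
      simp [tqf, hx0]
  · constructor
    · rintro ⟨ψ, hψ⟩
      haveI : Fact (1 < v) := ⟨hv2⟩
      set c : ZMod v := ψ 1 with hc
      have hmul : ∀ x : ZMod v, ψ x = x * c := by
        intro x
        have hx : x = x.val • (1 : ZMod v) := by
          rw [nsmul_eq_mul, mul_one, ZMod.natCast_val, ZMod.cast_id]
        rw [hx, map_nsmul, nsmul_eq_mul, ZMod.natCast_val, ZMod.cast_id, ← hx, hc]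
      have hcu : IsUnit c := by
        obtain ⟨y, hy⟩ := ψ.surjective 1
        exact IsUnit.of_mul_eq_one (a := c) y (by rw [mul_comm, ← hmul, hy])
      have hcop : IsCoprime ((c.val : ℤ)) (v : ℤ) := by
        rw [Nat.isCoprime_iff_coprime, ← ZMod.isUnit_iff_coprime]
        rwa [ZMod.natCast_val, ZMod.cast_id]
      refine ⟨(c.val : ℤ), hcop, ?_⟩
      have h1 := hψ 1
      rw [hmul 1, one_mul] at h1
      unfold tqf at h1
      rw [ZMod.val_one] at h1
      have h1' : ((((u' * 1^2 : ℤ) : ℚ)/(v:ℚ) : ℚ) : AddCircle (2:ℚ))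
          = ((((u * (c.val:ℤ)^2 : ℤ) : ℚ)/(v:ℚ) : ℚ) : AddCircle (2:ℚ)) := by
        convert h1 using 2 <;> push_cast <;> ring
      have := dvd_of_coe_eq v hv0 _ _ h1'
      rw [Int.modEq_iff_dvd]
      have h3 := (dvd_sub_comm).mp this
      simpa using h3
    · rintro ⟨w, hw, hmod⟩
      have hwu : IsUnit ((w : ZMod v)) := by
        obtain ⟨a, b, hab⟩ := hw
        refine IsUnit.of_mul_eq_one ((a : ℤ) : ZMod v) ?_
        have : ((a * w + b * v : ℤ) : ZMod v) = ((1 : ℤ) : ZMod v) := by rw [hab]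
        push_cast at this
        rw [ZMod.natCast_self, mul_zero, add_zero] at this
        rw [mul_comm]; exact_mod_cast this
      refine ⟨DistribMulAction.toAddEquiv (ZMod v) hwu.unit, fun x => ?_⟩
      have hψx : DistribMulAction.toAddEquiv (ZMod v) hwu.unit x = (w : ZMod v) * x := by
        simp [DistribMulAction.toAddEquiv, Units.smul_def, hwu.unit_spec]
      rw [hψx]
      have hx : ((x.val : ℤ) : ZMod v) = x := by
        push_cast [ZMod.natCast_val, ZMod.cast_id]
        rfl
      have hrw : (w : ZMod v) * x = (((w * (x.val : ℤ) : ℤ)) : ZMod v) := by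
        push_cast [hx]
        rfl
      rw [hrw, tqf_intCast u v hv0 hpar]
      have hx' : tqf u' v x = (((u' * (x.val:ℤ)^2 : ℤ) : ℚ) / (v:ℚ) : ℚ) := by
        conv_lhs => rw [← hx]
        rw [tqf_intCast u' v hv0 hpar']
      rw [hx']
      refine coe_div_eq v hv0 _ _ ?_
      have h2v : (2*(v:ℤ)) ∣ u * w^2 - u' := Int.modEq_iff_dvd.mp hmod
      obtain ⟨k, hk⟩ := h2v
      exact ⟨-(k * (x.val:ℤ)^2), by
        have : u' * (x.val:ℤ)^2 - u * (w * (x.val:ℤ))^2 = -((u * w^2 - u') * (x.val:ℤ)^2) := by ring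
        rw [this, hk]; ring⟩
end

section
/- For every integer k ≥ 1, the cokernel of the ℤ-linear endomorphism of (Fin 3 → ℤ) given by the matrix [[-6k, 0, 0], [0, 6, 9], [0, 9, 18]] is isomorphic, as an additive group, to ZMod 9 × ZMod 3 × ZMod (6k). -/
/-- For every integer k ≥ 1, the cokernel of the ℤ-linear endomorphism of
`Fin 3 → ℤ` given by the matrix `[[-6k, 0, 0], [0, 6, 9], [0, 9, 18]]` (the Gram matrix
of the lattice T(A)(3)) is isomorphic, as an additive group, to
`ZMod 9 × ZMod 3 × ZMod (6k)`. -/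
theorem stmt_19 (k : ℕ) (hk : 1 ≤ k) :
    Nonempty
      (((Fin 3 → ℤ) ⧸ LinearMap.range
          (Matrix.toLin' (!![-6 * (k : ℤ), 0, 0; 0, 6, 9; 0, 9, 18]))) ≃+
        (ZMod 9 × ZMod 3 × ZMod (6 * k))) := by
  set M : Matrix (Fin 3) (Fin 3) ℤ := !![-6 * (k : ℤ), 0, 0; 0, 6, 9; 0, 9, 18] with hM
  set d : Fin 3 → ℤ := ![-6 * (k : ℤ), 3, 9] with hd
  set D : Matrix (Fin 3) (Fin 3) ℤ := Matrix.diagonal d with hD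
  set n : Fin 3 → ℕ := ![6 * k, 3, 9] with hn
  have hMD : M = D * !![1, 0, 0; 0, 2, 3; 0, 1, 2] := by
    ext i j
    fin_cases i <;> fin_cases j <;>
      simp [hM, hD, hd, Matrix.mul_apply, Fin.sum_univ_three, Matrix.diagonal,
        Matrix.vecHead, Matrix.vecTail]
  have hDM : D = M * !![1, 0, 0; 0, 2, -3; 0, -1, 2] := by
    ext i j
    fin_cases i <;> fin_cases j <;>
      simp [hM, hD, hd, Matrix.mul_apply, Fin.sum_univ_three, Matrix.diagonal,
        Matrix.vecHead, Matrix.vecTail]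
  have hrange : LinearMap.range (Matrix.toLin' M) = LinearMap.range (Matrix.toLin' D) := by
    apply le_antisymm
    · rw [hMD, Matrix.toLin'_mul]
      exact LinearMap.range_comp_le_range _ _
    · conv_lhs => rw [hDM]
      rw [Matrix.toLin'_mul]
      exact LinearMap.range_comp_le_range _ _
  have hspan : ∀ i : Fin 3, (Ideal.span {d i} : Ideal ℤ) = Ideal.span {((n i : ℕ) : ℤ)} := by
    intro i
    fin_cases i
    · show Ideal.span {-6 * (k : ℤ)} = Ideal.span {((6 * k : ℕ) : ℤ)}
      rw [show (-6 * (k : ℤ)) = -(((6 * k : ℕ) : ℤ)) by push_cast; ring,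
        Ideal.span_singleton_neg]
    · show Ideal.span {(3 : ℤ)} = Ideal.span {((3 : ℕ) : ℤ)}
      norm_num
    · show Ideal.span {(9 : ℤ)} = Ideal.span {((9 : ℕ) : ℤ)}
      norm_num
  have hpi : LinearMap.range (Matrix.toLin' D) =
      Submodule.pi Set.univ (fun i : Fin 3 => (Ideal.span {((n i : ℕ) : ℤ)} : Submodule ℤ ℤ)) := by
    ext x
    simp only [LinearMap.mem_range, Submodule.mem_pi, Set.mem_univ, forall_true_left,
      Ideal.mem_span_singleton]
    constructor
    · rintro ⟨y, rfl⟩ i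
      rw [← Ideal.mem_span_singleton, ← hspan i, Ideal.mem_span_singleton]
      exact ⟨y i, by simp [hD, Matrix.toLin'_apply, Matrix.mulVec_diagonal]⟩
    · intro h
      have hdvd : ∀ i, d i ∣ x i := by
        intro i
        rw [← Ideal.mem_span_singleton, hspan i, Ideal.mem_span_singleton]
        exact h i
      choose c hc using hdvd
      refine ⟨c, funext fun i => ?_⟩
      simp only [hD, Matrix.toLin'_apply, Matrix.mulVec_diagonal]
      exact (hc i).symm
  have e1 : ((Fin 3 → ℤ) ⧸ LinearMap.range (Matrix.toLin' M)) ≃ₗ[ℤ]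
      ((Fin 3 → ℤ) ⧸ Submodule.pi Set.univ
        (fun i : Fin 3 => (Ideal.span {((n i : ℕ) : ℤ)} : Submodule ℤ ℤ))) :=
    Submodule.quotEquivOfEq _ _ (by rw [hrange, hpi])
  have e2 := Submodule.quotientPi
    (fun i : Fin 3 => (Ideal.span {((n i : ℕ) : ℤ)} : Submodule ℤ ℤ))
  have e3 : (∀ i : Fin 3, ℤ ⧸ (Ideal.span {((n i : ℕ) : ℤ)} : Submodule ℤ ℤ)) ≃+
      ∀ i : Fin 3, ZMod (n i) :=
    AddEquiv.piCongrRight fun i => (Int.quotientSpanNatEquivZMod (n i)).toAddEquiv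
  have e4 : (∀ i : Fin 3, ZMod (n i)) ≃+ ZMod 9 × ZMod 3 × ZMod (6 * k) :=
    { toFun := fun f => (f 2, f 1, f 0)
      invFun := fun p => Fin.cons (p.2.2 : ZMod (6 * k))
        (Fin.cons (p.2.1 : ZMod 3) (Fin.cons (p.1 : ZMod 9) (fun i => i.elim0)))
      left_inv := fun f => by
        funext i
        fin_cases i <;> rfl
      right_inv := fun p => rfl
      map_add' := fun f g => rfl }
  exact ⟨(((e1.trans e2).toAddEquiv).trans e3).trans e4⟩
end
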